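/- arXiv:2309.05102 — 2 statements merged into one kernel-verified Lean document; each statement's English description precedes it below -/
import Mathlib

section
/- Fix A > 0 and let g : ℝ → ℝ be continuously differentiable with bounded derivative. Let U be a random variable uniformly distributed on [−A, A] and let V be a random variable with probability density f_A(x) := C(A)^{-1} (e^A − e^x)(e^A − e^{−x}) on [−A, A], where C(A) := ∫_{−A}^{A} (e^A − e^x)(e^A − e^{−x}) dx. Then E[(e^{−U} − e^{U}) g(U)] = − e^{−A} (C(A)/(2A)) E[g'(V)]. -/
open Real MeasureTheory ProbabilityTheory

/-! The weight `w(x) = (e^A - e^x)(e^A - e^{-x})` vanishes at `±A` and has derivative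
`e^A (e^{-x} - e^x)`, so integrating `w g'` by parts over `[-A, A]` leaves no boundary term and gives
`-e^A ∫ (e^{-x} - e^x) g`. Both expectations are `∫_{-A}^{A}` against the respective densities
`1/(2A)` and `w / C(A)`, and `e^{-A} e^A = 1`. -/

/-- The normalizing constant `C(A) = ∫_{-A}^{A} (e^A - e^x)(e^A - e^{-x}) dx`. -/
noncomputable def Cconst (A : ℝ) : ℝ :=
  ∫ x in (-A)..A, (exp A - exp x) * (exp A - exp (-x))

/-- The uniform distribution on `[-A, A]`. -/
noncomputable def unifLaw (A : ℝ) : Measure ℝ :=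
  (ENNReal.ofReal (2 * A))⁻¹ • volume.restrict (Set.Icc (-A) A)

/-- The distribution on `[-A, A]` with density `f_A(x) = C(A)⁻¹ (e^A - e^x)(e^A - e^{-x})`. -/
noncomputable def densLaw (A : ℝ) : Measure ℝ :=
  (volume.restrict (Set.Icc (-A) A)).withDensity
    fun x => ENNReal.ofReal ((Cconst A)⁻¹ * ((exp A - exp x) * (exp A - exp (-x))))

noncomputable def expWeight (A x : ℝ) : ℝ :=
  (exp A - exp x) * (exp A - exp (-x))

section

variable {A : ℝ}

lemma expWeight_nonneg {x : ℝ} (hx : x ∈ Set.Icc (-A) A) : 0 ≤ expWeight A x := by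
  have h₁ : exp x ≤ exp A := exp_le_exp.2 hx.2
  have h₂ : exp (-x) ≤ exp A := exp_le_exp.2 (by linarith [hx.1])
  exact mul_nonneg (by linarith) (by linarith)

lemma expWeight_pos {x : ℝ} (hx : x ∈ Set.Ioo (-A) A) : 0 < expWeight A x := by
  have h₁ : exp x < exp A := exp_lt_exp.2 hx.2
  have h₂ : exp (-x) < exp A := exp_lt_exp.2 (by linarith [hx.1])
  exact mul_pos (by linarith) (by linarith)

@[simp] lemma expWeight_self : expWeight A A = 0 := by simp [expWeight]

@[simp] lemma expWeight_neg_self : expWeight A (-A) = 0 := by simp [expWeight]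

lemma hasDerivAt_expWeight (x : ℝ) : HasDerivAt (expWeight A) (exp A * (exp (-x) - exp x)) x := by
  have h₁ : HasDerivAt (fun y => exp A - exp y) (-exp x) x := by
    simpa using (hasDerivAt_exp x).const_sub (exp A)
  have h₂ : HasDerivAt (fun y => exp A - exp (-y)) (exp (-x)) x := by
    simpa using ((hasDerivAt_exp (-x)).comp x (hasDerivAt_neg x)).const_sub (exp A)
  exact (h₁.mul h₂).congr_deriv (by ring)

lemma continuous_expWeight : Continuous (expWeight A) := by
  unfold expWeight; fun_prop

lemma Cconst_pos (hA : 0 < A) : 0 < Cconst A :=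
  intervalIntegral.intervalIntegral_pos_of_pos_on (continuous_expWeight.intervalIntegrable _ _)
    (fun _ => expWeight_pos) (by linarith)

lemma integral_unifLaw (hA : 0 ≤ A) (f : ℝ → ℝ) :
    ∫ x, f x ∂unifLaw A = (2 * A)⁻¹ * ∫ x in (-A)..A, f x := by
  rw [unifLaw, integral_smul_measure, ENNReal.toReal_inv, ENNReal.toReal_ofReal (by linarith),
    intervalIntegral.integral_of_le (by linarith), integral_Icc_eq_integral_Ioc, smul_eq_mul]

lemma integral_densLaw (hA : 0 ≤ A) (f : ℝ → ℝ) :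
    ∫ x, f x ∂densLaw A = (Cconst A)⁻¹ * ∫ x in (-A)..A, expWeight A x * f x := by
  have hC : 0 ≤ Cconst A :=
    intervalIntegral.integral_nonneg (by linarith) fun x hx => expWeight_nonneg hx
  rw [densLaw, integral_withDensity_eq_integral_toReal_smul (by fun_prop)
      (ae_of_all _ fun _ => ENNReal.ofReal_lt_top),
    intervalIntegral.integral_of_le (by linarith), ← integral_Icc_eq_integral_Ioc,
    ← integral_const_mul]
  refine setIntegral_congr_fun measurableSet_Icc fun x hx => ?_
  rw [show (exp A - exp x) * (exp A - exp (-x)) = expWeight A x from rfl,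
    ENNReal.toReal_ofReal (mul_nonneg (inv_nonneg.2 hC) (expWeight_nonneg hx)), smul_eq_mul,
    mul_assoc]

lemma integral_expWeight_mul_deriv {g g' : ℝ → ℝ}
    (hg : ∀ x ∈ Set.uIcc (-A) A, HasDerivAt g (g' x) x) (hg' : IntervalIntegrable g' volume (-A) A) :
    ∫ x in (-A)..A, expWeight A x * g' x = -exp A * ∫ x in (-A)..A, (exp (-x) - exp x) * g x := by
  rw [intervalIntegral.integral_mul_deriv_eq_deriv_mul (fun x _ => hasDerivAt_expWeight x) hg
      ((by fun_prop : Continuous fun x => exp A * (exp (-x) - exp x)).intervalIntegrable _ _) hg',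
    expWeight_self, expWeight_neg_self]
  simp only [zero_mul, sub_zero, mul_assoc, intervalIntegral.integral_const_mul]
  ring

end

theorem stmt_6_general (A : ℝ) (hA : 0 < A) (g : ℝ → ℝ) (hg : ContDiff ℝ 1 g)
    (Ω : Type*) [MeasureSpace Ω]
    (U V : Ω → ℝ) (hU : Measurable U) (hV : Measurable V)
    (hUlaw : Measure.map U ℙ = unifLaw A)
    (hVlaw : Measure.map V ℙ = densLaw A) :
    ∫ ω, (exp (-(U ω)) - exp (U ω)) * g (U ω) =
      -exp (-A) * (Cconst A / (2 * A)) * ∫ ω, deriv g (V ω) := by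
  have hg' : Continuous (deriv g) := hg.continuous_deriv le_rfl
  have hEU : ∫ ω, (exp (-(U ω)) - exp (U ω)) * g (U ω) =
      (2 * A)⁻¹ * ∫ x in (-A)..A, (exp (-x) - exp x) * g x := by
    rw [← integral_unifLaw hA.le, ← hUlaw,
      integral_map hU.aemeasurable (by fun_prop : Continuous _).aestronglyMeasurable]
  have hEV : ∫ ω, deriv g (V ω) =
      (Cconst A)⁻¹ * (-exp A * ∫ x in (-A)..A, (exp (-x) - exp x) * g x) := by
    rw [← integral_expWeight_mul_deriv (fun x _ => (hg.differentiable one_ne_zero x).hasDerivAt)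
        (hg'.intervalIntegrable _ _), ← integral_densLaw hA.le, ← hVlaw,
      integral_map hV.aemeasurable hg'.aestronglyMeasurable]
  rw [hEU, hEV, exp_neg]
  field_simp [(Cconst_pos hA).ne', (exp_pos A).ne', hA.ne']

/-- If `g` is continuously differentiable with bounded derivative, `U` is uniform on `[-A, A]`
and `V` has density `f_A` on `[-A, A]`, then
`E[(e^{-U} - e^{U}) g(U)] = -e^{-A} (C(A)/(2A)) E[g'(V)]`. -/
theorem stmt_6 (A : ℝ) (hA : 0 < A) (g : ℝ → ℝ) (hg : ContDiff ℝ 1 g)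
    (M : ℝ) (hgM : ∀ x : ℝ, |deriv g x| ≤ M)
    (Ω : Type*) [MeasureSpace Ω] [IsProbabilityMeasure (ℙ : Measure Ω)]
    (U V : Ω → ℝ) (hU : Measurable U) (hV : Measurable V)
    (hUlaw : Measure.map U ℙ = unifLaw A)
    (hVlaw : Measure.map V ℙ = densLaw A) :
    ∫ ω, (exp (-(U ω)) - exp (U ω)) * g (U ω) =
      -exp (-A) * (Cconst A / (2 * A)) * ∫ ω, deriv g (V ω) :=
  stmt_6_general A hA g hg Ω U V hU hV hUlaw hVlaw
end

section
/- Let d ≥ 1, let L : ℝ^d → ℝ be Lipschitz continuous with constant M (with respect to the Euclidean norm), let α, A > 0, and for n ≥ 1 set A_n = A n^{-1/2}. Let U^{(1)}, …, U^{(n)} be random vectors in ℝ^d whose components take values in [−A_n, A_n] almost surely, and define the process Z^n by Z^n_{t_{-1}} = Z^n_{t_0} = z₀ and Z^n_{t_ℓ,ν} = Z^n_{t_{ℓ-1},ν} + α (L(Z^n_{t_{ℓ-1}} + U^{(ℓ)}) − L(Z^n_{t_{ℓ-2}} + U^{(ℓ-1)})) (e^{−U^{(ℓ)}_ν} − e^{U^{(ℓ)}_ν})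 for ℓ = 1, …, n, where t_ℓ = ℓ/n. Then there exists a finite constant c, depending only on α, A, M and d (but not on n), such that almost surely, for all sufficiently large n, max_{ℓ=1,…,n} ‖Z^n_{t_ℓ} − Z^n_{t_{ℓ-1}}‖ ≤ c/n. -/
open Real MeasureTheory ProbabilityTheory Filter Topology

lemma aux_norm_le {d : ℕ} (x : EuclideanSpace ℝ (Fin d)) (B : ℝ) (hB : 0 ≤ B)
    (h : ∀ i, |x i| ≤ B) : ‖x‖ ≤ Real.sqrt d * B := by
  rw [EuclideanSpace.norm_eq]
  have hsum : ∑ i, ‖x i‖ ^ 2 ≤ (d : ℝ) * B ^ 2 := by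
    calc ∑ i, ‖x i‖ ^ 2 ≤ ∑ _i : Fin d, B ^ 2 := by
          apply Finset.sum_le_sum
          intro i _
          have hi := h i
          rw [Real.norm_eq_abs]
          nlinarith [abs_nonneg (x i)]
      _ = (d : ℝ) * B ^ 2 := by
          simp [Finset.sum_const, Finset.card_univ]
  calc Real.sqrt (∑ i, ‖x i‖ ^ 2) ≤ Real.sqrt ((d : ℝ) * B ^ 2) := Real.sqrt_le_sqrt hsum
    _ = Real.sqrt d * B := by
        rw [Real.sqrt_mul (by positivity), Real.sqrt_sq hB]

lemma aux_exp_bound (u B : ℝ) (hu : |u| ≤ B) :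
    |Real.exp (-u) - Real.exp u| ≤ 2 * B * Real.exp B := by
  have key : ∀ v : ℝ, 0 ≤ v → v ≤ B →
      |Real.exp (-v) - Real.exp v| ≤ 2 * B * Real.exp B := by
    intro v hv hvB
    have hle : Real.exp (-v) ≤ Real.exp v := Real.exp_le_exp.2 (by linarith)
    rw [abs_sub_comm, abs_of_nonneg (sub_nonneg.2 hle)]
    have h2 : -2 * v + 1 ≤ Real.exp (-2 * v) := Real.add_one_le_exp (-2 * v)
    have h3 : Real.exp (-v) = Real.exp v * Real.exp (-2 * v) := by
      rw [← Real.exp_add]; ring_nf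
    have h4 : Real.exp v ≤ Real.exp B := Real.exp_le_exp.2 hvB
    nlinarith [Real.exp_pos v, Real.exp_pos B, mul_nonneg hv (Real.exp_pos v).le,
      mul_le_mul h4 hvB hv (Real.exp_pos B).le]
  rcases le_total 0 u with h | h
  · exact key u h (by rwa [abs_of_nonneg h] at hu)
  · have h5 := key (-u) (by linarith) (by rwa [abs_of_nonpos h] at hu)
    rwa [neg_neg, abs_sub_comm] at h5

lemma aux_ev (A ε : ℝ) (hA : 0 < A) (hε : 0 < ε) :
    ∀ᶠ n : ℕ in atTop, A / Real.sqrt n ≤ ε := by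
  rw [eventually_atTop]
  refine ⟨⌈(A / ε) ^ 2⌉₊ + 1, fun n hn => ?_⟩
  have hn1 : 1 ≤ n := by omega
  have hn0 : (0 : ℝ) < n := by exact_mod_cast hn1
  have hs : 0 < Real.sqrt n := Real.sqrt_pos.2 hn0
  rw [div_le_iff₀ hs]
  have h1 : (A / ε) ^ 2 ≤ (n : ℝ) := by
    calc (A / ε) ^ 2 ≤ (⌈(A / ε) ^ 2⌉₊ : ℝ) := Nat.le_ceil _
      _ ≤ (n : ℝ) := by exact_mod_cast Nat.le_of_succ_le hn
  have h2 : A / ε ≤ Real.sqrt n := by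
    calc A / ε = Real.sqrt ((A / ε) ^ 2) := (Real.sqrt_sq (by positivity)).symm
      _ ≤ Real.sqrt n := Real.sqrt_le_sqrt h1
  calc A = ε * (A / ε) := by field_simp
    _ ≤ ε * Real.sqrt n := by nlinarith

/-- **Size of the individual STDP update steps.**
Let `L : ℝ^d → ℝ` be `M`-Lipschitz (Euclidean norm), `α, A > 0`, `A_n = A n^{-1/2}`, and for
each `n` let the noise vectors `U^{(n,ℓ)}` have all components in `[-A_n, A_n]` almost surely.
Let `Z^n` be given by `Z^n_{t_{-1}} = Z^n_{t_0} = z₀` and, for `1 ≤ ℓ ≤ n`,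
`Z^n_{t_ℓ,ν} = Z^n_{t_{ℓ-1},ν} + α (L(Z^n_{t_{ℓ-1}} + U^{(n,ℓ)}) - L(Z^n_{t_{ℓ-2}} +
U^{(n,ℓ-1)})) (e^{-U^{(n,ℓ)}_ν} - e^{U^{(n,ℓ)}_ν})` (with `Z n ℓ` denoting `Z^n_{t_ℓ}`,
`t_ℓ = ℓ/n`, truncated subtraction realizing `Z^n_{t_{-1}} = Z^n_{t_0}`).  Then there is a
finite constant `c` depending only on `α, A, M, d` (not on `n`) such that almost surely, for
all sufficiently large `n`, `max_{1 ≤ ℓ ≤ n} ‖Z^n_{t_ℓ} - Z^n_{t_{ℓ-1}}‖ ≤ c/n`. -/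
theorem stmt_13 (d : ℕ) (hd : 1 ≤ d) (M α A : ℝ) (hM : 0 ≤ M) (hα : 0 < α) (hA : 0 < A) :
    ∃ c : ℝ, ∀ L : EuclideanSpace ℝ (Fin d) → ℝ, LipschitzWith (Real.toNNReal M) L →
      ∀ z₀ : EuclideanSpace ℝ (Fin d),
      ∀ (Ω : Type) (_ : MeasureSpace Ω), IsProbabilityMeasure (ℙ : Measure Ω) →
      ∀ U : ℕ → ℕ → Ω → EuclideanSpace ℝ (Fin d),
      (∀ n ℓ : ℕ, ∀ᵐ ω, ∀ i : Fin d,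
        U n ℓ ω i ∈ Set.Icc (-(A / Real.sqrt n)) (A / Real.sqrt n)) →
      ∀ Z : ℕ → ℕ → Ω → EuclideanSpace ℝ (Fin d), (∀ n ω, Z n 0 ω = z₀) →
      (∀ n ℓ : ℕ, 1 ≤ ℓ → ℓ ≤ n → ∀ ω, ∀ ν : Fin d,
        Z n ℓ ω ν = Z n (ℓ - 1) ω ν +
          α * (L (Z n (ℓ - 1) ω + U n ℓ ω) - L (Z n (ℓ - 2) ω + U n (ℓ - 1) ω)) *
            (exp (-(U n ℓ ω ν)) - exp (U n ℓ ω ν))) →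
      ∀ᵐ ω, ∀ᶠ n : ℕ in atTop, ∀ ℓ : ℕ, 1 ≤ ℓ → ℓ ≤ n →
        ‖Z n ℓ ω - Z n (ℓ - 1) ω‖ ≤ c / n := by
  refine ⟨8 * Real.exp 1 * (d : ℝ) * α * M * A ^ 2, ?_⟩
  intro L hL z₀ Ω _ _ U hU Z hZ0 hZrec
  have hUae : ∀ᵐ ω, ∀ n ℓ : ℕ, ∀ i, |U n ℓ ω i| ≤ A / Real.sqrt n := by
    rw [ae_all_iff]
    intro n
    rw [ae_all_iff]
    intro ℓ
    filter_upwards [hU n ℓ] with ω h i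
    exact abs_le.2 ⟨(h i).1, (h i).2⟩
  filter_upwards [hUae] with ω hω
  set K : ℝ := 2 * Real.exp 1 * Real.sqrt d * α * M + 1 with hK
  have hKpos : 0 < K := by positivity
  filter_upwards [aux_ev A 1 hA one_pos, aux_ev A (1 / (2 * K)) hA (by positivity),
    eventually_ge_atTop 1] with n hAnle1 hAnleK hn1
  set An : ℝ := A / Real.sqrt n with hAndef
  have hnpos : (0 : ℝ) < n := by exact_mod_cast hn1
  have hAn0 : 0 ≤ An := by positivity
  have hq0 : (0 : ℝ) ≤ 8 * Real.exp 1 * (d : ℝ) * α * M * A ^ 2 / n := by positivity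
  suffices hcl : ∀ ℓ : ℕ, ℓ ≤ n →
      ‖Z n ℓ ω - Z n (ℓ - 1) ω‖ ≤ 8 * Real.exp 1 * (d : ℝ) * α * M * A ^ 2 / n by
    intro ℓ _ hℓn
    exact hcl ℓ hℓn
  set q : ℝ := 8 * Real.exp 1 * (d : ℝ) * α * M * A ^ 2 / n with hqdef
  intro ℓ
  induction ℓ with
  | zero =>
      intro _
      simp only [Nat.zero_sub, sub_self, norm_zero]
      exact hq0
  | succ ℓ ih =>
      intro hℓn
      have ihℓ : ‖Z n ℓ ω - Z n (ℓ - 1) ω‖ ≤ q := ih (by omega)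
      have hrec := hZrec n (ℓ + 1) (by omega) hℓn ω
      have h12 : ℓ + 1 - 2 = ℓ - 1 := by omega
      simp only [Nat.add_sub_cancel, h12] at hrec ⊢
      have hUb : ∀ m : ℕ, ∀ i : Fin d, |U n m ω i| ≤ An := fun m i => hω n m i
      have hUd : ‖U n (ℓ + 1) ω - U n ℓ ω‖ ≤ Real.sqrt d * (2 * An) := by
        apply aux_norm_le _ _ (by positivity)
        intro i
        have h1 := hUb (ℓ + 1) i
        have h2 := hUb ℓ i
        have heq : (U n (ℓ + 1) ω - U n ℓ ω) i = U n (ℓ + 1) ω i - U n ℓ ω i := rfl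
        rw [heq]
        exact (abs_sub _ _).trans (by linarith)
      have hxy : ‖(Z n ℓ ω + U n (ℓ + 1) ω) - (Z n (ℓ - 1) ω + U n ℓ ω)‖
          ≤ q + Real.sqrt d * (2 * An) := by
        have heq : (Z n ℓ ω + U n (ℓ + 1) ω) - (Z n (ℓ - 1) ω + U n ℓ ω)
            = (Z n ℓ ω - Z n (ℓ - 1) ω) + (U n (ℓ + 1) ω - U n ℓ ω) := by abel
        rw [heq]
        exact (norm_add_le _ _).trans (add_le_add ihℓ hUd)
      have hLd : |L (Z n ℓ ω + U n (ℓ + 1) ω) - L (Z n (ℓ - 1) ω + U n ℓ ω)|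
          ≤ M * (q + Real.sqrt d * (2 * An)) := by
        have h5 := hL.dist_le_mul (Z n ℓ ω + U n (ℓ + 1) ω) (Z n (ℓ - 1) ω + U n ℓ ω)
        rw [Real.dist_eq, dist_eq_norm, Real.coe_toNNReal M hM] at h5
        exact h5.trans (mul_le_mul_of_nonneg_left hxy hM)
      have hex : ∀ ν : Fin d,
          |Real.exp (-(U n (ℓ + 1) ω ν)) - Real.exp (U n (ℓ + 1) ω ν)|
            ≤ 2 * An * Real.exp 1 := by
        intro ν
        have h6 := aux_exp_bound (U n (ℓ + 1) ω ν) An (hUb _ ν)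
        have hAe : Real.exp An ≤ Real.exp 1 := Real.exp_le_exp.2 hAnle1
        nlinarith [Real.exp_pos An]
      have hBnn : 0 ≤ α * (M * (q + Real.sqrt d * (2 * An)) * (2 * An * Real.exp 1)) :=
        mul_nonneg hα.le (mul_nonneg (mul_nonneg hM (add_nonneg hq0 (by positivity)))
          (by positivity))
      have hcomp : ∀ ν : Fin d, |(Z n (ℓ + 1) ω - Z n ℓ ω) ν|
          ≤ α * (M * (q + Real.sqrt d * (2 * An)) * (2 * An * Real.exp 1)) := by
        intro ν
        have heq : (Z n (ℓ + 1) ω - Z n ℓ ω) ν = Z n (ℓ + 1) ω ν - Z n ℓ ω ν := rfl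
        rw [heq, hrec ν]
        have heq2 : Z n ℓ ω ν +
            α * (L (Z n ℓ ω + U n (ℓ + 1) ω) - L (Z n (ℓ - 1) ω + U n ℓ ω)) *
              (Real.exp (-(U n (ℓ + 1) ω ν)) - Real.exp (U n (ℓ + 1) ω ν)) - Z n ℓ ω ν
            = α * (L (Z n ℓ ω + U n (ℓ + 1) ω) - L (Z n (ℓ - 1) ω + U n ℓ ω)) *
              (Real.exp (-(U n (ℓ + 1) ω ν)) - Real.exp (U n (ℓ + 1) ω ν)) := by ring
        rw [heq2, abs_mul, abs_mul, abs_of_nonneg hα.le, mul_assoc]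
        apply mul_le_mul_of_nonneg_left _ hα.le
        exact mul_le_mul hLd (hex ν) (abs_nonneg _)
          (mul_nonneg hM (add_nonneg hq0 (by positivity)))
      have hnorm : ‖Z n (ℓ + 1) ω - Z n ℓ ω‖
          ≤ Real.sqrt d * (α * (M * (q + Real.sqrt d * (2 * An)) * (2 * An * Real.exp 1))) :=
        aux_norm_le _ _ hBnn hcomp
      have hsd2 : (Real.sqrt d) ^ 2 = (d : ℝ) := Real.sq_sqrt (Nat.cast_nonneg d)
      have hAn2 : An ^ 2 = A ^ 2 / n := by
        rw [hAndef, div_pow, Real.sq_sqrt hnpos.le]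
      have hterm2 : 4 * Real.exp 1 * α * M * (Real.sqrt d) ^ 2 * An ^ 2 = q / 2 := by
        rw [hsd2, hAn2, hqdef]
        field_simp
        ring
      have hF1 : 2 * Real.exp 1 * Real.sqrt d * α * M * An ≤ 1 / 2 := by
        have hK1 : 2 * Real.exp 1 * Real.sqrt d * α * M ≤ K := by rw [hK]; linarith
        calc 2 * Real.exp 1 * Real.sqrt d * α * M * An ≤ K * An :=
              mul_le_mul_of_nonneg_right hK1 hAn0
          _ ≤ K * (1 / (2 * K)) := mul_le_mul_of_nonneg_left hAnleK hKpos.le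
          _ = 1 / 2 := by field_simp
      calc ‖Z n (ℓ + 1) ω - Z n ℓ ω‖
          ≤ Real.sqrt d * (α * (M * (q + Real.sqrt d * (2 * An)) * (2 * An * Real.exp 1))) :=
            hnorm
        _ = (2 * Real.exp 1 * Real.sqrt d * α * M * An) * q
            + 4 * Real.exp 1 * α * M * (Real.sqrt d) ^ 2 * An ^ 2 := by ring
        _ ≤ (1 / 2) * q + q / 2 := by
            have hA' : (2 * Real.exp 1 * Real.sqrt d * α * M * An) * q ≤ (1 / 2) * q :=
              mul_le_mul_of_nonneg_right hF1 hq0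
            linarith [hterm2]
        _ = q := by ring
end
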